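/- arXiv:math/0004032 — 7 statements merged into one kernel-verified Lean document; each statement's English description precedes it below -/
import Mathlib

section
/- For the invariant element a = Σ_{i,k ∈ I} ((C^q)^{-1})_{ik} e_i ⊗ e_k and the linear form b̃^q on V ⊗ V determined by b̃^q(e_i ⊗ e_k) = C^q_{ik}, one has b̃^q(a) = -[d]_q (q^{d+1} + q^{-d-1}) = ((q^{-2d} - 1) - q²(q^{2d} - 1))/(q² - 1), where d = n - m and [d]_q = (q^d - q^{-d})/(q - q^{-1}); in particular, for q not a root of unity, b̃^q(a) = 0 if and only if n = m. -/
lemma zkey {K : Type*} [Field K] {q : K}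
    (hqru : ∀ k : ℕ, k ≠ 0 → q ^ k ≠ 1) : ∀ k : ℤ, k ≠ 0 → q ^ k ≠ 1 := by
  have pos : ∀ k : ℤ, 0 < k → q ^ k ≠ 1 := by
    intro k hk h
    have : q ^ k.toNat = 1 := by
      rw [← zpow_natCast, Int.toNat_of_nonneg hk.le]; exact h
    exact hqru k.toNat (by omega) this
  intro k hk h
  rcases lt_trichotomy k 0 with h1 | h1 | h1
  · have : q ^ (-k) = 1 := by rw [zpow_neg, h, inv_one]
    exact pos (-k) (by omega) this
  · exact hk h1
  · exact pos k h1 h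

lemma gsum_nat {K : Type*} [Field K] {a : K} (ha0 : a ≠ 0) (k : ℕ) :
    (a - 1) * ∑ i ∈ Finset.Ioc (0:ℤ) (k:ℤ), a ^ i = a ^ ((k:ℤ) + 1) - a := by
  induction k with
  | zero => simp
  | succ k ih =>
      have hsplit : Finset.Ioc (0:ℤ) ((k:ℤ)+1) = Finset.Ioc (0:ℤ) (k:ℤ) ∪ {(k:ℤ)+1} := by
        ext x
        simp only [Finset.mem_Ioc, Finset.mem_union, Finset.mem_singleton]
        omega
      have hdisj : Disjoint (Finset.Ioc (0:ℤ) (k:ℤ)) ({(k:ℤ)+1} : Finset ℤ) := by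
        rw [Finset.disjoint_left]; intro x hx hx'
        simp only [Finset.mem_Ioc] at hx
        simp only [Finset.mem_singleton] at hx'
        omega
      push_cast
      rw [hsplit, Finset.sum_union hdisj, Finset.sum_singleton, mul_add, ih,
        zpow_add_one₀ ha0 ((k:ℤ)+1)]
      ring

lemma gsum {K : Type*} [Field K] {a : K} (ha0 : a ≠ 0) (N : ℤ) (hN : 0 ≤ N) :
    (a - 1) * ∑ i ∈ Finset.Ioc 0 N, a ^ i = a ^ (N + 1) - a := by
  have := gsum_nat ha0 N.toNat
  rwa [Int.toNat_of_nonneg hN] at this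

/-- For the invariant element a = Σ ((C^q)^{-1})_{ik} e_i⊗e_k and
the linear form b̃^q with b̃^q(e_i⊗e_k) = C^q_{ik}, one has
b̃^q(a) = -[d]_q (q^{d+1} + q^{-d-1}), d = n-m.  Since C^q is antidiagonal,
b̃^q(a) = Σ_{i∈I} C^q_{i,-i} / C^q_{-i,i}.  Moreover this equals
((q^{-2d}-1) - q²(q^{2d}-1))/(q²-1), and b̃^q(a) = 0 iff n = m (for q not a
root of unity). -/
theorem stmt6 (K : Type*) [Field K] [CharZero K]
    (m n r d : ℤ) (hm : 1 ≤ m) (hn : 1 ≤ n) (hr : r = m + n) (hd : d = n - m)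
    (q : K) (hq0 : q ≠ 0) (hqru : ∀ k : ℕ, k ≠ 0 → q ^ k ≠ 1)
    (cq : ℤ → K)
    (hcq : ∀ i : ℤ,
      cq i = if 1 ≤ i ∧ i ≤ n then q ^ i
        else if n + 1 ≤ i ∧ i ≤ r then q ^ (2 * n - i)
        else if -n ≤ i ∧ i ≤ -1 then -(q ^ i)
        else q ^ (-i - 2 * n - 2)) :
    (∑ i ∈ (Finset.Icc (-r) r).erase 0, cq i / cq (-i))
        = -((q ^ d - q ^ (-d)) / (q - q⁻¹)) * (q ^ (d + 1) + q ^ (-(d + 1))) ∧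
    (∑ i ∈ (Finset.Icc (-r) r).erase 0, cq i / cq (-i))
        = (1 / (q ^ (2 : ℤ) - 1)) *
            ((q ^ (-(2 * d)) - 1) - q ^ (2 : ℤ) * (q ^ (2 * d) - 1)) ∧
    ((∑ i ∈ (Finset.Icc (-r) r).erase 0, cq i / cq (-i)) = 0 ↔ n = m) := by
  have hzk := zkey hqru
  have hq2 : q ^ (2:ℤ) ≠ 1 := hzk 2 (by norm_num)
  set Q := q ^ (2:ℤ) with hQdef
  have hQ0 : Q ≠ 0 := zpow_ne_zero _ hq0
  have hQm1 : Q - 1 ≠ 0 := sub_ne_zero.mpr hq2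
  have hQi1 : Q⁻¹ - 1 ≠ 0 := by
    rw [sub_ne_zero]; exact fun h => hq2 (by rw [← inv_inv Q, h, inv_one])
  -- Step 1: fold the sum over positive indices
  have hsets : (Finset.Icc (-r) r).erase 0
      = Finset.Ioc 0 r ∪ (Finset.Ioc 0 r).image (fun i => -i) := by
    ext x
    simp only [Finset.mem_erase, Finset.mem_Icc, Finset.mem_union, Finset.mem_Ioc,
      Finset.mem_image]
    constructor
    · rintro ⟨hx0, hx1, hx2⟩
      rcases lt_or_gt_of_ne hx0 with h | h
      · exact Or.inr ⟨-x, ⟨by omega, by omega⟩, by omega⟩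
      · exact Or.inl ⟨h, hx2⟩
    · rintro (⟨h1, h2⟩ | ⟨a, ⟨ha1, ha2⟩, rfl⟩) <;> refine ⟨by omega, by omega, by omega⟩
  have hdisj1 : Disjoint (Finset.Ioc 0 r) ((Finset.Ioc 0 r).image (fun i => -i)) := by
    rw [Finset.disjoint_left]
    intro x hx hx'
    simp only [Finset.mem_Ioc] at hx
    simp only [Finset.mem_image, Finset.mem_Ioc] at hx'
    obtain ⟨a, ⟨ha1, _⟩, ha3⟩ := hx'
    omega
  have hS1 : (∑ i ∈ (Finset.Icc (-r) r).erase 0, cq i / cq (-i))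
      = ∑ i ∈ Finset.Ioc 0 r, (cq i / cq (-i) + cq (-i) / cq i) := by
    rw [hsets, Finset.sum_union hdisj1,
      Finset.sum_image (fun a _ b _ h => neg_injective h)]
    rw [← Finset.sum_add_distrib]
    refine Finset.sum_congr rfl fun i _ => by rw [neg_neg]
  -- Step 2: split the positive range
  have hsplit : Finset.Ioc (0:ℤ) r = Finset.Ioc 0 n ∪ Finset.Ioc n r :=
    (Finset.Ioc_union_Ioc_eq_Ioc (by omega) (by omega)).symm
  have hdisj2 : Disjoint (Finset.Ioc (0:ℤ) n) (Finset.Ioc n r) := by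
    rw [Finset.disjoint_left]
    intro x hx hx'
    simp only [Finset.mem_Ioc] at hx hx'
    omega
  -- Step 3: evaluate the two parts
  have hA : ∑ i ∈ Finset.Ioc (0:ℤ) n, (cq i / cq (-i) + cq (-i) / cq i)
      = ∑ i ∈ Finset.Ioc (0:ℤ) n, (-(Q ^ i) - (Q⁻¹) ^ i) := by
    refine Finset.sum_congr rfl fun i hi => ?_
    have hi' := Finset.mem_Ioc.mp hi
    rw [hcq i, hcq (-i), if_pos ⟨by omega, by omega⟩, if_neg (by omega),
      if_neg (by omega), if_pos ⟨by omega, by omega⟩]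
    have h2i : Q ^ i = q ^ i * q ^ i := by
      rw [hQdef, ← zpow_mul, two_mul, zpow_add₀ hq0]
    rw [inv_zpow, h2i, zpow_neg]
    have ht : q ^ i ≠ 0 := zpow_ne_zero _ hq0
    field_simp
    ring
  have hB : ∑ i ∈ Finset.Ioc n r, (cq i / cq (-i) + cq (-i) / cq i)
      = ∑ i ∈ Finset.Ioc n r, (Q ^ (2*n+1-i) + (Q ^ (2*n+1-i))⁻¹) := by
    refine Finset.sum_congr rfl fun i hi => ?_
    have hi' := Finset.mem_Ioc.mp hi
    rw [hcq i, hcq (-i), if_neg (by omega), if_pos ⟨by omega, by omega⟩,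
      if_neg (by omega), if_neg (by omega), if_neg (by omega)]
    have e1 : Q ^ (2*n+1-i) = q ^ (2*n-i) / q ^ (-(-i) - 2*n - 2) := by
      have e0 : 2*(2*n+1-i) = (2*n-i) - (-(-i) - 2*n - 2) := by ring
      rw [hQdef, ← zpow_mul, e0, zpow_sub₀ hq0]
    rw [e1, inv_div]
  -- Step 4: reindex the high part
  have hmap : Finset.Ioc n r = Finset.map (addLeftEmbedding n) (Finset.Ioc 0 m) := by
    rw [Finset.map_add_left_Ioc]; congr 1 <;> omega
  have hB2 : ∑ i ∈ Finset.Ioc n r, (Q ^ (2*n+1-i) + (Q ^ (2*n+1-i))⁻¹)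
      = Q ^ (n+1) * ∑ j ∈ Finset.Ioc (0:ℤ) m, (Q⁻¹) ^ j
        + (Q ^ (n+1))⁻¹ * ∑ j ∈ Finset.Ioc (0:ℤ) m, Q ^ j := by
    rw [hmap, Finset.sum_map]
    simp only [addLeftEmbedding_apply]
    have hcongr : ∀ j ∈ Finset.Ioc (0:ℤ) m,
        (Q ^ (2*n+1-(n+j)) + (Q ^ (2*n+1-(n+j)))⁻¹)
          = Q ^ (n+1) * (Q⁻¹) ^ j + (Q ^ (n+1))⁻¹ * Q ^ j := by
      intro j _
      have e : 2*n+1-(n+j) = (n+1) - j := by ring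
      rw [e, zpow_sub₀ hQ0, inv_zpow]
      have h1 : Q ^ (n+1) ≠ 0 := zpow_ne_zero _ hQ0
      have h2 : Q ^ j ≠ 0 := zpow_ne_zero _ hQ0
      field_simp
    rw [Finset.sum_congr rfl hcongr, Finset.sum_add_distrib,
      ← Finset.mul_sum, ← Finset.mul_sum]
  have hA2 : ∑ i ∈ Finset.Ioc (0:ℤ) n, (-(Q ^ i) - (Q⁻¹) ^ i)
      = -(∑ i ∈ Finset.Ioc (0:ℤ) n, Q ^ i) - ∑ i ∈ Finset.Ioc (0:ℤ) n, (Q⁻¹) ^ i := by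
    rw [Finset.sum_sub_distrib, Finset.sum_neg_distrib]
  -- Step 5: geometric sums
  have hQi0 : Q⁻¹ ≠ 0 := inv_ne_zero hQ0
  have gA := gsum hQ0 n (by omega)
  have gA' := gsum hQi0 n (by omega)
  have gB := gsum hQ0 m (by omega)
  have gB' := gsum hQi0 m (by omega)
  set SA := ∑ i ∈ Finset.Ioc (0:ℤ) n, Q ^ i with hSA
  set SA' := ∑ i ∈ Finset.Ioc (0:ℤ) n, (Q⁻¹) ^ i with hSA'
  set SB := ∑ j ∈ Finset.Ioc (0:ℤ) m, Q ^ j with hSB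
  set SB' := ∑ j ∈ Finset.Ioc (0:ℤ) m, (Q⁻¹) ^ j with hSB'
  have hSval : (∑ i ∈ (Finset.Icc (-r) r).erase 0, cq i / cq (-i))
      = -SA - SA' + (Q ^ (n+1) * SB' + (Q ^ (n+1))⁻¹ * SB) := by
    rw [hS1, hsplit, Finset.sum_union hdisj2, hA, hB, hB2, hA2]
  -- Step 6: closed forms
  have hSAv : SA = (Q ^ (n+1) - Q) / (Q - 1) := by
    rw [eq_div_iff hQm1]; linear_combination gA
  have hSA'v : SA' = ((Q⁻¹) ^ (n+1) - Q⁻¹) / (Q⁻¹ - 1) := by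
    rw [eq_div_iff hQi1]; linear_combination gA'
  have hSBv : SB = (Q ^ (m+1) - Q) / (Q - 1) := by
    rw [eq_div_iff hQm1]; linear_combination gB
  have hSB'v : SB' = ((Q⁻¹) ^ (m+1) - Q⁻¹) / (Q⁻¹ - 1) := by
    rw [eq_div_iff hQi1]; linear_combination gB'
  -- Step 7: statement 2
  set X := Q ^ n with hXdef
  set Y := Q ^ m with hYdef
  have hX0 : X ≠ 0 := zpow_ne_zero _ hQ0
  have hY0 : Y ≠ 0 := zpow_ne_zero _ hQ0
  have hQn1 : Q ^ (n+1) = X * Q := by rw [zpow_add_one₀ hQ0]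
  have hQm1' : Q ^ (m+1) = Y * Q := by rw [zpow_add_one₀ hQ0]
  have hQin1 : (Q⁻¹) ^ (n+1) = (X * Q)⁻¹ := by rw [inv_zpow, hQn1]
  have hQim1 : (Q⁻¹) ^ (m+1) = (Y * Q)⁻¹ := by rw [inv_zpow, hQm1']
  have hQd : q ^ (2*d) = X / Y := by
    rw [zpow_mul, ← hQdef, hd, zpow_sub₀ hQ0]
  have hQnd : q ^ (-(2*d)) = Y / X := by
    rw [zpow_neg, hQd, inv_div]
  have gA2 : (Q - 1) * SA = X * Q - Q := by rw [gA, hQn1]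
  have gB2 : (Q - 1) * SB = Y * Q - Q := by rw [gB, hQm1']
  have gA'2 : (Q - 1) * SA' = 1 - X⁻¹ := by
    rw [hQin1] at gA'
    have e : (Q - 1) * SA' = -Q * ((Q⁻¹ - 1) * SA') := by
      field_simp; ring
    rw [e, gA']
    field_simp
    ring
  have gB'2 : (Q - 1) * SB' = 1 - Y⁻¹ := by
    rw [hQim1] at gB'
    have e : (Q - 1) * SB' = -Q * ((Q⁻¹ - 1) * SB') := by
      field_simp; ring
    rw [e, gB']
    field_simp
    ring
  have main2 : (∑ i ∈ (Finset.Icc (-r) r).erase 0, cq i / cq (-i))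
      = (1 / (Q - 1)) * ((q ^ (-(2*d)) - 1) - Q * (q ^ (2*d) - 1)) := by
    rw [hSval, hQn1, hQd, hQnd]
    apply mul_left_cancel₀ hQm1
    have expand : (Q - 1) * (-SA - SA' + (X * Q * SB' + (X * Q)⁻¹ * SB))
        = -((Q - 1) * SA) - ((Q - 1) * SA')
          + (X * Q * ((Q - 1) * SB') + (X * Q)⁻¹ * ((Q - 1) * SB)) := by ring
    rw [expand, gA2, gA'2, gB2, gB'2]
    field_simp
    ring
  -- Step 8: statement 1
  have hqq : Q = q * q := by
    rw [hQdef, show (2:ℤ) = 1 + 1 from rfl, zpow_add_one₀ hq0, zpow_one]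
  have hqq0 : q * q - 1 ≠ 0 := by rw [← hqq]; exact hQm1
  have hqqi : q - q⁻¹ ≠ 0 := by
    rw [sub_ne_zero]
    intro h
    apply hq2
    rw [hqq]
    nth_rewrite 2 [h]
    exact mul_inv_cancel₀ hq0
  have hu0 : q ^ d ≠ 0 := zpow_ne_zero _ hq0
  have hQdu : q ^ (2*d) = q ^ d * q ^ d := by rw [two_mul, zpow_add₀ hq0]
  have hqd1 : q ^ (d+1) = q ^ d * q := zpow_add_one₀ hq0 d
  have hqnd : q ^ (-d) = (q ^ d)⁻¹ := zpow_neg q d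
  have hqnd1 : q ^ (-(d+1)) = (q ^ d * q)⁻¹ := by rw [zpow_neg, hqd1]
  have hRHSeq : -((q ^ d - q ^ (-d)) / (q - q⁻¹)) * (q ^ (d + 1) + q ^ (-(d + 1)))
      = (1 / (Q - 1)) * ((q ^ (-(2*d)) - 1) - Q * (q ^ (2*d) - 1)) := by
    rw [show q ^ (-(2*d)) = (q ^ d * q ^ d)⁻¹ by rw [zpow_neg, hQdu],
      hQdu, hqnd, hqd1, hqnd1, hqq]
    field_simp
    ring
  refine ⟨by rw [main2, ← hRHSeq], main2, ?_⟩
  -- Step 9: statement 3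
  rw [main2]
  constructor
  · intro h
    have h1 : (q ^ (-(2*d)) - 1) - Q * (q ^ (2*d) - 1) = 0 := by
      rcases mul_eq_zero.mp h with h' | h'
      · exact absurd h' (one_div_ne_zero hQm1)
      · exact h'
    have hw0 : q ^ (2*d) ≠ 0 := zpow_ne_zero _ hq0
    have h3 : (1 - q ^ (2*d)) * (1 + Q * q ^ (2*d))
        = q ^ (2*d) * ((q ^ (-(2*d)) - 1) - Q * (q ^ (2*d) - 1)) := by
      rw [zpow_neg]
      field_simp
      ring
    rw [h1, mul_zero] at h3
    rcases mul_eq_zero.mp h3 with hc | hc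
    · -- q^(2d) = 1
      by_contra hne
      have : q ^ (2*d) = 1 := by linear_combination -hc
      exact hzk (2*d) (by omega) this
    · -- 1 + Q * q^(2d) = 0, i.e. q^(2d+2) = -1
      exfalso
      have hneg : q ^ (2*d+2) = -1 := by
        rw [zpow_add₀ hq0, ← hQdef]
        linear_combination hc
      rcases eq_or_ne d (-1) with hdm | hdm
      · rw [hdm] at hneg
        norm_num at hneg
      · have hsq : q ^ (2*(2*d+2)) = 1 := by
          rw [two_mul, zpow_add₀ hq0, hneg]
          norm_num
        exact hzk (2*(2*d+2)) (by omega) hsq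
  · intro h
    have hd0 : d = 0 := by omega
    rw [hd0]
    norm_num
end

section
/- For the element t = e_{-1}⊗e_1 - q² e_1⊗e_{-1} + (q - q^{-1}) Σ_{i=2}^{n+m} ((C^q)^{-1})_{i,-i} e_i⊗e_{-i}, the value of the linear form b̃^q is b̃^q(t) = -q^{-1}(q^{2d+2} + 1), where d = n - m. In particular b̃^q(t) ≠ 0 when q is not a root of unity. -/
/-!
On `2 ≤ i ≤ n` the summand `(C^q_{-i,i})⁻¹ C^q_{i,-i}` is `-q^{2i}`, and on `n < i ≤ r` it is
`q^{2(2n+1-i)}`, so after reflecting the second range the sum is a difference of two geometric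
series in `q²`. Writing `q - q⁻¹ = q⁻¹ (q² - 1)`, both series telescope and leave
`q⁻¹ (q⁴ - q^{2d+2})`, which together with the two boundary terms gives `-q⁻¹ (q^{2d+2} + 1)`.
This is nonzero since `q^{2d+2} = -1` would make `q` a root of unity, or `2 = 0` when `d = -1`.
-/

open Finset

theorem mul_sum_Ioc_zpow_eq_sub {K : Type*} [Field K] {x : K} (hx : x ≠ 0) {a b : ℤ}
    (hab : a ≤ b) : (x - 1) * ∑ i ∈ Ioc a b, x ^ i = x ^ (b + 1) - x ^ (a + 1) := by
  induction b, hab using Int.leInduction with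
  | base => simp
  | succ b hab ih =>
    rw [← insert_Ioc_right_eq_Ioc_add_one hab, sum_insert (by simp), mul_add, ih,
      zpow_add_one₀ hx (b + 1)]
    ring

/-- The diagonal entry `C^q_{i,-i}` of the paper, for `V` of dimension `2r`. -/
def formCoeff {K : Type*} [Field K] (q : K) (n r i : ℤ) : K :=
  if 1 ≤ i ∧ i ≤ n then q ^ i
  else if n + 1 ≤ i ∧ i ≤ r then q ^ (2 * n - i)
  else if -n ≤ i ∧ i ≤ -1 then -(q ^ i)
  else q ^ (-i - 2 * n - 2)

section FormCoeff

variable {K : Type*} [Field K] {q : K} {n r : ℤ}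

theorem formCoeff_one (hn : 1 ≤ n) : formCoeff q n r 1 = q := by
  simp [formCoeff, hn]

theorem formCoeff_neg_one (hn : 1 ≤ n) : formCoeff q n r (-1) = -q⁻¹ := by
  rw [formCoeff, if_neg (by omega), if_neg (by omega), if_pos (by omega), zpow_neg_one]

theorem inv_formCoeff_neg_mul_formCoeff_of_le {i : ℤ} (hi : 1 ≤ i) (hin : i ≤ n) :
    (formCoeff q n r (-i))⁻¹ * formCoeff q n r i = -(q ^ 2) ^ i := by
  rw [formCoeff, formCoeff, if_neg (by omega), if_neg (by omega), if_pos (by omega),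
    if_pos (by omega), zpow_neg, inv_neg, inv_inv, sq, mul_zpow]
  ring

theorem inv_formCoeff_neg_mul_formCoeff_of_lt (hq : q ≠ 0) (hn : 0 ≤ n) {i : ℤ}
    (hni : n < i) (hir : i ≤ r) :
    (formCoeff q n r (-i))⁻¹ * formCoeff q n r i = (q ^ 2) ^ (2 * n + 1 - i) := by
  rw [formCoeff, formCoeff, if_neg (by omega), if_neg (by omega), if_neg (by omega),
    if_neg (by omega), if_pos (by omega), ← zpow_neg, ← zpow_add₀ hq, ← zpow_natCast, ← zpow_mul]
  congr 1
  push_cast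
  ring

theorem sub_one_mul_sum_formCoeff (hq : q ≠ 0) (hn : 1 ≤ n) (hnr : n ≤ r) :
    (q ^ 2 - 1) * ∑ i ∈ Icc 2 r, (formCoeff q n r (-i))⁻¹ * formCoeff q n r i
      = (q ^ 2) ^ (2 : ℤ) - (q ^ 2) ^ (2 * n - r + 1) := by
  have hreflect : ∑ i ∈ Ioc n r, (q ^ 2) ^ (2 * n + 1 - i) = ∑ j ∈ Ioc (2 * n - r) n, (q ^ 2) ^ j :=
    sum_nbij' (2 * n + 1 - ·) (2 * n + 1 - ·) (by intro i; simp; omega)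
      (by intro i; simp; omega) (by intro i _; simp) (by intro i _; simp) (by intro i _; rfl)
  have hq2 : q ^ 2 ≠ 0 := pow_ne_zero 2 hq
  rw [show Icc (2 : ℤ) r = Ioc 1 r by ext; simp only [mem_Icc, mem_Ioc]; omega,
    ← Ioc_union_Ioc_eq_Ioc hn hnr, sum_union (Ioc_disjoint_Ioc_of_le le_rfl),
    sum_congr rfl fun i hi ↦ inv_formCoeff_neg_mul_formCoeff_of_le (mem_Ioc.1 hi).1.le
      (mem_Ioc.1 hi).2,
    sum_congr rfl fun i hi ↦ inv_formCoeff_neg_mul_formCoeff_of_lt hq (by omega) (mem_Ioc.1 hi).1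
      (mem_Ioc.1 hi).2,
    hreflect, sum_neg_distrib, mul_add, mul_neg, mul_sum_Ioc_zpow_eq_sub hq2 hn,
    mul_sum_Ioc_zpow_eq_sub hq2 (by omega), one_add_one_eq_two]
  ring

theorem formCoeff_value (hq : q ≠ 0) (hn : 1 ≤ n) (hnr : n ≤ r) :
    formCoeff q n r (-1) - q ^ (2 : ℤ) * formCoeff q n r 1
        + (q - q⁻¹) * ∑ i ∈ Icc 2 r, (formCoeff q n r (-i))⁻¹ * formCoeff q n r i
      = -q⁻¹ * ((q ^ 2) ^ (2 * n - r + 1) + 1) := by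
  rw [show q - q⁻¹ = q⁻¹ * (q ^ 2 - 1) by field_simp, mul_assoc,
    sub_one_mul_sum_formCoeff hq hn hnr, formCoeff_neg_one hn, formCoeff_one hn]
  field_simp
  ring

end FormCoeff

theorem zpow_ne_neg_one {K : Type*} [Field K] [NeZero (2 : K)] {q : K}
    (hq : ∀ k : ℕ, k ≠ 0 → q ^ k ≠ 1) (e : ℤ) : q ^ e ≠ -1 := by
  intro he
  obtain ⟨k, hk⟩ : ∃ k : ℕ, q ^ k = -1 := by
    obtain ⟨k, rfl | rfl⟩ := Int.eq_nat_or_neg e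
    · exact ⟨k, by simpa using he⟩
    · exact ⟨k, by rwa [zpow_neg, zpow_natCast, inv_eq_iff_eq_inv, inv_neg_one] at he⟩
  rcases eq_or_ne k 0 with rfl | hk0
  · exact two_ne_zero (α := K) (by linear_combination hk)
  · exact hq (2 * k) (by omega) (by rw [pow_mul', hk]; norm_num)

-- `cq i` is `C^q_{i,-i}` and `((C^q)^{-1})_{i,-i} = (C^q_{-i,i})⁻¹`, so the left side is `b̃^q(t)`.
/-- For t = e_{-1}⊗e_1 - q² e_1⊗e_{-1}
+ (q - q^{-1}) Σ_{i=2}^{n+m} ((C^q)^{-1})_{i,-i} e_i⊗e_{-i}, the linear form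
b̃^q (with b̃^q(e_i⊗e_k) = C^q_{i,-i} δ_{i,-k}) takes the value
b̃^q(t) = -q^{-1}(q^{2d+2} + 1), d = n-m; in particular b̃^q(t) ≠ 0 when q is
not a root of unity.  Since ((C^q)^{-1})_{i,-i} = (C^q_{-i,i})⁻¹, the value
b̃^q(t) is C^q_{-1,1} - q² C^q_{1,-1} + (q-q^{-1}) Σ_{i=2}^{r} (C^q_{-i,i})⁻¹ C^q_{i,-i}. -/
theorem stmt9 (K : Type*) [Field K] [CharZero K]
    (m n r d : ℤ) (hm : 1 ≤ m) (hn : 1 ≤ n) (hr : r = m + n) (hd : d = n - m)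
    (q : K) (hq0 : q ≠ 0) (hqru : ∀ k : ℕ, k ≠ 0 → q ^ k ≠ 1)
    (cq : ℤ → K)
    (hcq : ∀ i : ℤ,
      cq i = if 1 ≤ i ∧ i ≤ n then q ^ i
        else if n + 1 ≤ i ∧ i ≤ r then q ^ (2 * n - i)
        else if -n ≤ i ∧ i ≤ -1 then -(q ^ i)
        else q ^ (-i - 2 * n - 2)) :
    cq (-1) - q ^ (2 : ℤ) * cq 1
        + (q - q⁻¹) * ∑ i ∈ Finset.Icc (2 : ℤ) r, (cq (-i))⁻¹ * cq i
      = -q⁻¹ * (q ^ (2 * d + 2) + 1) ∧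
    cq (-1) - q ^ (2 : ℤ) * cq 1
        + (q - q⁻¹) * ∑ i ∈ Finset.Icc (2 : ℤ) r, (cq (-i))⁻¹ * cq i ≠ 0 := by
  obtain rfl : cq = formCoeff q n r := funext hcq
  have hexp : (q ^ 2) ^ (2 * n - r + 1) = q ^ (2 * d + 2) := by
    rw [← zpow_natCast, ← zpow_mul]
    congr 1
    push_cast
    omega
  have hvalue := formCoeff_value hq0 hn (show n ≤ r by omega)
  rw [hexp] at hvalue
  refine ⟨hvalue, hvalue ▸ mul_ne_zero (neg_ne_zero.2 (inv_ne_zero hq0)) fun h ↦ ?_⟩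
  exact zpow_ne_neg_one hqru _ (eq_neg_of_add_eq_zero_left h)
end

section
/- Suppose R̂ = (q + q^{-1}) P_s - q^{-1} Id + c K and R̂' = (q + q^{-1}) P_s - q Id + c' K, where P_s is an idempotent with P_s K = K P_s = 0, K² = κ K with κ = b̃^q(a) = -[d]_q(q^{d+1}+q^{-d-1}), c = -(q - q^{-1})(1 + q^{2d+2})^{-1}, and c' = (q - q^{-1})(1 + q^{-2d-2})^{-1}. Then R̂' = R̂^{-1}, i.e., R̂ R̂' = R̂' R̂ = Id. -/
/-! Write both operators as `(q + q⁻¹) • P + x • 1 + y • K`. Because `P` is idempotent and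
annihilates `K` on both sides, while `K² = κ K`, such combinations multiply coefficientwise:
the `P`-coefficient of the product vanishes since `q + q⁻¹ - q - q⁻¹ = 0`, the identity
coefficient is `q⁻¹ q = 1`, and, with `t = q^(d+1)`, the `K`-coefficient equals
`(q - q⁻¹) / (1 + t²) * ((q^d - q^(-d)) t + q - q⁻¹ t²)`, which vanishes since
`(q^d - q^(-d)) q^(d+1) = q^(2d+1) - q`. -/

section Combination

variable {R A : Type*} [CommRing R] [Ring A] [Algebra R A] {P K : A} {κ : R}

theorem smul_add_smul_one_add_smul_mul_eq (hP : P * P = P) (hPK : P * K = 0)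
    (hKP : K * P = 0) (hK : K * K = κ • K) (α x y β u v : R) :
    (α • P + x • (1 : A) + y • K) * (β • P + u • (1 : A) + v • K)
      = (α * β + α * u + x * β) • P + (x * u) • (1 : A) + (x * v + y * u + y * v * κ) • K := by
  simp only [mul_add, add_mul, smul_mul_smul_comm, hP, hPK, hKP, hK, mul_one, one_mul,
    smul_zero, smul_smul]
  module

theorem smul_add_smul_one_add_smul_mul_eq_one (hP : P * P = P) (hPK : P * K = 0)
    (hKP : K * P = 0) (hK : K * K = κ • K) {α x y u v : R} (hα : α + x + u = 0)
    (hxu : x * u = 1) (hyv : x * v + y * u + y * v * κ = 0) :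
    (α • P + x • (1 : A) + y • K) * (α • P + u • (1 : A) + v • K) = 1 := by
  rw [smul_add_smul_one_add_smul_mul_eq hP hPK hKP hK, hxu, hyv,
    show α * α + α * u + x * α = α * (α + x + u) by ring, hα]
  simp

end Combination

theorem rMatrix_K_coeff_eq_zero {F : Type*} [Field F] {q : F} (hq0 : q ≠ 0) (hq2 : q ^ 2 ≠ 1)
    {d : ℤ} (hd : (1 : F) + q ^ (2 * d + 2) ≠ 0) :
    let c := -(q - q⁻¹) * ((1 : F) + q ^ (2 * d + 2))⁻¹
    let c' := (q - q⁻¹) * ((1 : F) + q ^ (-(2 * d + 2)))⁻¹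
    let κ := -((q ^ d - q ^ (-d)) / (q - q⁻¹)) * (q ^ (d + 1) + q ^ (-(d + 1)))
    (-q⁻¹) * c' + c * (-q) + c * c' * κ = 0 := by
  intro c c' κ
  have hqq : q - q⁻¹ ≠ 0 :=
    sub_ne_zero.2 fun h => hq2 (by rw [sq]; nth_rw 2 [h]; exact mul_inv_cancel₀ hq0)
  have ht : q ^ (d + 1) ≠ 0 := zpow_ne_zero _ hq0
  have h2 : q ^ (2 * d + 2) = (q ^ (d + 1)) ^ 2 := by
    rw [← zpow_natCast, ← zpow_mul]; ring_nf
  have hd' : q ^ d = q ^ (d + 1) * q⁻¹ := by rw [zpow_add_one₀ hq0, mul_inv_cancel_right₀ hq0]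
  have hnd : q ^ (-d) = q * (q ^ (d + 1))⁻¹ := by
    rw [zpow_neg, hd', mul_inv, inv_inv, mul_comm]
  simp only [c, c', κ, zpow_neg, h2, hd', hnd] at hd ⊢
  generalize q ^ (d + 1) = t at ht hd ⊢
  have hd2 : t ^ 2 + 1 ≠ 0 := by rwa [add_comm]
  field_simp
  ring

theorem stmt10_general (K : Type*) [Field K]
    (V : Type*) [AddCommGroup V] [Module K V]
    (q : K) (hq0 : q ≠ 0) (hqru : ∀ k : ℕ, k ≠ 0 → q ^ k ≠ 1)
    (d : ℤ) (hd : (1 : K) + q ^ (2 * d + 2) ≠ 0)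
    (κ : K) (hκ : κ = -((q ^ d - q ^ (-d)) / (q - q⁻¹)) * (q ^ (d + 1) + q ^ (-(d + 1))))
    (Ps Kop : Module.End K V)
    (hPs : Ps * Ps = Ps) (hPK : Ps * Kop = 0) (hKP : Kop * Ps = 0)
    (hK2 : Kop * Kop = κ • Kop)
    (Rh Rh' : Module.End K V)
    (hRh : Rh = (q + q⁻¹) • Ps - q⁻¹ • (1 : Module.End K V)
        + (-(q - q⁻¹) * ((1 : K) + q ^ (2 * d + 2))⁻¹) • Kop)
    (hRh' : Rh' = (q + q⁻¹) • Ps - q • (1 : Module.End K V)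
        + ((q - q⁻¹) * ((1 : K) + q ^ (-(2 * d + 2)))⁻¹) • Kop) :
    Rh * Rh' = 1 ∧ Rh' * Rh = 1 := by
  have hcoeff := rMatrix_K_coeff_eq_zero hq0 (hqru 2 two_ne_zero) hd
  rw [← hκ] at hcoeff
  rw [sub_eq_add_neg, ← neg_smul] at hRh hRh'
  subst hRh hRh'
  constructor
  · refine smul_add_smul_one_add_smul_mul_eq_one hPs hPK hKP hK2 (by ring) ?_ hcoeff
    field_simp
  · refine smul_add_smul_one_add_smul_mul_eq_one hPs hPK hKP hK2 (by ring) ?_ ?_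
    · field_simp
    · linear_combination hcoeff

/-- With P_s idempotent, P_s K = K P_s = 0, K² = κK with
κ = -[d]_q(q^{d+1}+q^{-d-1}),
R̂ = (q+q⁻¹)P_s - q⁻¹ Id - (q-q⁻¹)(1+q^{2d+2})⁻¹ K and
R̂' = (q+q⁻¹)P_s - q Id + (q-q⁻¹)(1+q^{-2d-2})⁻¹ K,
one has R̂ R̂' = R̂' R̂ = Id, i.e. R̂' = R̂⁻¹. -/
theorem stmt10 (K : Type*) [Field K] [CharZero K]
    (V : Type*) [AddCommGroup V] [Module K V]
    (q : K) (hq0 : q ≠ 0) (hqru : ∀ k : ℕ, k ≠ 0 → q ^ k ≠ 1)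
    (d : ℤ) (hd : (1 : K) + q ^ (2 * d + 2) ≠ 0)
    (κ : K) (hκ : κ = -((q ^ d - q ^ (-d)) / (q - q⁻¹)) * (q ^ (d + 1) + q ^ (-(d + 1))))
    (Ps Kop : Module.End K V)
    (hPs : Ps * Ps = Ps) (hPK : Ps * Kop = 0) (hKP : Kop * Ps = 0)
    (hK2 : Kop * Kop = κ • Kop)
    (Rh Rh' : Module.End K V)
    (hRh : Rh = (q + q⁻¹) • Ps - q⁻¹ • (1 : Module.End K V)
        + (-(q - q⁻¹) * ((1 : K) + q ^ (2 * d + 2))⁻¹) • Kop)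
    (hRh' : Rh' = (q + q⁻¹) • Ps - q • (1 : Module.End K V)
        + ((q - q⁻¹) * ((1 : K) + q ^ (-(2 * d + 2)))⁻¹) • Kop) :
    Rh * Rh' = 1 ∧ Rh' * Rh = 1 :=
  stmt10_general K V q hq0 hqru d hd κ hκ Ps Kop hPs hPK hKP hK2 Rh Rh' hRh hRh'
end

section
/- Under the same algebraic hypotheses (P_s² = P_s, P_s K = K P_s = 0, K² = κK with κ = -[d]_q(q^{d+1}+q^{-d-1})), the operator R̂ = (q+q^{-1})P_s - q^{-1}Id - (q-q^{-1})(1+q^{2d+2})^{-1}K satisfies R̂ - R̂^{-1} = (q - q^{-1})(Id - K). -/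
/-!
Both operators are of the form `(q + q⁻¹) • Ps - β • 1 + b • Kop`. Since `Ps` is idempotent and
orthogonal to `Kop`, and `Kop² = κ • Kop`, such operators multiply like elements of the
two-dimensional algebra spanned by `1` and `Kop` once the `Ps`-terms cancel, which they do because
the constant terms `q⁻¹` and `q` sum to `q + q⁻¹`. The product is then `1 + c • Kop`, and `c`
vanishes by a Laurent-polynomial identity in `q` and `q ^ d`. The difference needs only
`(1 + x)⁻¹ + (1 + x⁻¹)⁻¹ = 1` for `x = q ^ (2 * d + 2)`.
-/

theorem inv_one_add_add_inv_one_add_inv {F : Type*} [Field F] {x : F} (hx : x ≠ 0)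
    (h : 1 + x ≠ 0) : (1 + x)⁻¹ + (1 + x⁻¹)⁻¹ = 1 := by
  rw [inv_eq_one_div x, one_add_div hx, inv_div, add_comm x 1, inv_eq_one_div, ← add_div,
    div_self h]

-- For `q = q⁻¹` the quotient is junk, but then the numerator vanishes as well.
theorem sub_inv_mul_div_sub_inv {F : Type*} [Field F] (q : F) (d : ℤ) :
    (q - q⁻¹) * ((q ^ d - q ^ (-d)) / (q - q⁻¹)) = q ^ d - q ^ (-d) := by
  refine mul_div_cancel_of_imp' fun h => ?_
  rw [zpow_neg, ← inv_zpow, ← sub_eq_zero.1 h, sub_self]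

theorem zpow_two_mul_add_two_mul_qnum {F : Type*} [Field F] {q : F} (hq : q ≠ 0) (d : ℤ) :
    q ^ (2 * d + 2) * ((q ^ d - q ^ (-d)) * (q ^ (d + 1) + q ^ (-(d + 1))))
      = (q⁻¹ * q ^ (2 * d + 2) - q) * (1 + q ^ (2 * d + 2)) := by
  have ht : q ^ d ≠ 0 := zpow_ne_zero _ hq
  rw [show 2 * d + 2 = d + d + 2 by ring, zpow_add₀ hq, zpow_add₀ hq, zpow_add_one₀ hq,
    zpow_neg, zpow_neg, zpow_add_one₀ hq]
  field_simp
  ring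

theorem braid_coeff_eq_zero {F : Type*} [Field F] {q x κ : F} (hx : x ≠ 0) (h : 1 + x ≠ 0)
    (hκ : x * ((q - q⁻¹) * κ) = -((q⁻¹ * x - q) * (1 + x))) :
    (-(q - q⁻¹) * (1 + x)⁻¹) * ((q - q⁻¹) * (1 + x⁻¹)⁻¹) * κ
      - q⁻¹ * ((q - q⁻¹) * (1 + x⁻¹)⁻¹) - q * (-(q - q⁻¹) * (1 + x)⁻¹) = 0 := by
  rw [inv_eq_one_div x, one_add_div hx, inv_div, add_comm x 1]
  generalize q⁻¹ = p at hκ ⊢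
  field_simp
  linear_combination -(q - p) * hκ

theorem mul_of_idempotent_of_orthogonal {F A : Type*} [Field F] [Ring A] [Algebra F A]
    {P E : A} {κ : F} (hP : P * P = P) (hPE : P * E = 0) (hEP : E * P = 0)
    (hE : E * E = κ • E) (α β b c : F) :
    ((α + β) • P - β • (1 : A) + b • E) * ((α + β) • P - α • (1 : A) + c • E)
      = (α * β) • (1 : A) + (b * c * κ - β * c - α * b) • E := by
  simp only [mul_add, add_mul, mul_sub, sub_mul, smul_mul_smul_comm, one_mul, mul_one,
    hP, hPE, hEP, hE, smul_zero, smul_smul]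
  module

theorem stmt11_general (K : Type*) [Field K]
    (V : Type*) [AddCommGroup V] [Module K V]
    (q : K) (hq0 : q ≠ 0)
    (d : ℤ) (hd : (1 : K) + q ^ (2 * d + 2) ≠ 0)
    (κ : K) (hκ : κ = -((q ^ d - q ^ (-d)) / (q - q⁻¹)) * (q ^ (d + 1) + q ^ (-(d + 1))))
    (Ps Kop : Module.End K V)
    (hPs : Ps * Ps = Ps) (hPK : Ps * Kop = 0) (hKP : Kop * Ps = 0)
    (hK2 : Kop * Kop = κ • Kop)
    (Rh Rhinv : Module.End K V)
    (hRh : Rh = (q + q⁻¹) • Ps - q⁻¹ • (1 : Module.End K V)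
        + (-(q - q⁻¹) * ((1 : K) + q ^ (2 * d + 2))⁻¹) • Kop)
    (hRhinv : Rhinv = (q + q⁻¹) • Ps - q • (1 : Module.End K V)
        + ((q - q⁻¹) * ((1 : K) + q ^ (-(2 * d + 2)))⁻¹) • Kop) :
    Rh * Rhinv = 1 ∧
    Rh - Rhinv = (q - q⁻¹) • ((1 : Module.End K V) - Kop) := by
  have hx : q ^ (2 * d + 2) ≠ 0 := zpow_ne_zero _ hq0
  have hsκ : q ^ (2 * d + 2) * ((q - q⁻¹) * κ)
      = -((q⁻¹ * q ^ (2 * d + 2) - q) * (1 + q ^ (2 * d + 2))) := by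
    rw [← zpow_two_mul_add_two_mul_qnum hq0, ← sub_inv_mul_div_sub_inv q d, hκ]
    ring
  rw [zpow_neg] at hRhinv
  subst hRh hRhinv
  constructor
  · rw [mul_of_idempotent_of_orthogonal hPs hPK hKP hK2, mul_inv_cancel₀ hq0,
      braid_coeff_eq_zero hx hd hsκ, one_smul, zero_smul, add_zero]
  · have hsum := inv_one_add_add_inv_one_add_inv hx hd
    match_scalars
    · ring
    · ring
    · linear_combination -(q - q⁻¹) * hsum

/-- Under the same algebraic hypotheses, the operator
R̂ = (q+q⁻¹)P_s - q⁻¹Id - (q-q⁻¹)(1+q^{2d+2})⁻¹K satisfies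
R̂ - R̂⁻¹ = (q - q⁻¹)(Id - K), where
R̂⁻¹ = (q+q⁻¹)P_s - q Id + (q-q⁻¹)(1+q^{-2d-2})⁻¹K. -/
theorem stmt11 (K : Type*) [Field K] [CharZero K]
    (V : Type*) [AddCommGroup V] [Module K V]
    (q : K) (hq0 : q ≠ 0) (hqru : ∀ k : ℕ, k ≠ 0 → q ^ k ≠ 1)
    (d : ℤ) (hd : (1 : K) + q ^ (2 * d + 2) ≠ 0)
    (κ : K) (hκ : κ = -((q ^ d - q ^ (-d)) / (q - q⁻¹)) * (q ^ (d + 1) + q ^ (-(d + 1))))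
    (Ps Kop : Module.End K V)
    (hPs : Ps * Ps = Ps) (hPK : Ps * Kop = 0) (hKP : Kop * Ps = 0)
    (hK2 : Kop * Kop = κ • Kop)
    (Rh Rhinv : Module.End K V)
    (hRh : Rh = (q + q⁻¹) • Ps - q⁻¹ • (1 : Module.End K V)
        + (-(q - q⁻¹) * ((1 : K) + q ^ (2 * d + 2))⁻¹) • Kop)
    (hRhinv : Rhinv = (q + q⁻¹) • Ps - q • (1 : Module.End K V)
        + ((q - q⁻¹) * ((1 : K) + q ^ (-(2 * d + 2)))⁻¹) • Kop) :
    Rh * Rhinv = 1 ∧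
    Rh - Rhinv = (q - q⁻¹) • ((1 : Module.End K V) - Kop) :=
  stmt11_general K V q hq0 d hd κ hκ Ps Kop hPs hPK hKP hK2 Rh Rhinv hRh hRhinv
end

section
/- Under the same algebraic hypotheses, R̂ satisfies R̂ K = K R̂ = -q^{-2d-1} K and the cubic relation (R̂ - q·Id)(R̂ + q^{-1}·Id)(R̂ + q^{-2d-1}·Id) = 0. -/
/-!
Write `R̂ = (q + q⁻¹) P - q⁻¹ + c K`. As `P` is idempotent and annihilates `K` on both sides,
`R̂ K = K R̂ = (c κ - q⁻¹) K` and `(R̂ - q)(R̂ + q⁻¹) = c (c κ - q - q⁻¹) K`, so `R̂` satisfies a cubic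
relation whose third root is `q⁻¹ - c κ`. For the given `c` one has `c κ = q⁻¹ - q^(-2d-1)`: the
factorisation `q^(d+1) + q^(-d-1) = q^(-d-1) (1 + q^(2d+2))` cancels the denominator of `c`.
-/

section RMatrix

variable {K A : Type*} [Field K] [Ring A] [Algebra K A]

def rMatrix (q c : K) (P E : A) : A := (q + q⁻¹) • P - q⁻¹ • 1 + c • E

variable {P E : A} {κ : K}

theorem rMatrix_mul_right (hPE : P * E = 0) (hE : E * E = κ • E) (q c : K) :
    rMatrix q c P E * E = (-q⁻¹ + c * κ) • E := by
  simp only [rMatrix, add_mul, sub_mul, smul_mul_assoc, hPE, hE, one_mul, smul_zero, smul_smul]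
  module

theorem rMatrix_mul_left (hEP : E * P = 0) (hE : E * E = κ • E) (q c : K) :
    E * rMatrix q c P E = (-q⁻¹ + c * κ) • E := by
  simp only [rMatrix, mul_add, mul_sub, mul_smul_comm, hEP, hE, mul_one, smul_zero, smul_smul]
  module

theorem rMatrix_quadratic (hP : IsIdempotentElem P) (hPE : P * E = 0) (hEP : E * P = 0)
    (hE : E * E = κ • E) (q c : K) :
    (rMatrix q c P E - q • 1) * (rMatrix q c P E + q⁻¹ • 1) =
      (c * (c * κ - (q + q⁻¹))) • E := by
  simp only [rMatrix, sub_mul, add_mul, mul_sub, mul_add, smul_mul_assoc, mul_smul_comm,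
    hP.eq, hPE, hEP, hE, one_mul, mul_one, smul_zero, smul_smul]
  match_scalars <;> ring

theorem rMatrix_cubic (hP : IsIdempotentElem P) (hPE : P * E = 0) (hEP : E * P = 0)
    (hE : E * E = κ • E) (q c : K) :
    (rMatrix q c P E - q • 1) * (rMatrix q c P E + q⁻¹ • 1) *
      (rMatrix q c P E + (q⁻¹ - c * κ) • 1) = 0 := by
  rw [rMatrix_quadratic hP hPE hEP hE, smul_mul_assoc, mul_add, rMatrix_mul_left hEP hE,
    mul_smul_comm, mul_one, ← add_smul]
  simp

end RMatrix

theorem coeff_mul_kappa_eq {K : Type*} [Field K] {q : K} (hq0 : q ≠ 0) (hq : q ^ 2 ≠ 1) {d : ℤ}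
    (hd : (1 : K) + q ^ (2 * d + 2) ≠ 0) :
    -(q - q⁻¹) * ((1 : K) + q ^ (2 * d + 2))⁻¹ *
      (-((q ^ d - q ^ (-d)) / (q - q⁻¹)) * (q ^ (d + 1) + q ^ (-(d + 1)))) =
      q⁻¹ - q ^ (-(2 * d + 1)) := by
  have factor : q ^ (d + 1) + q ^ (-(d + 1)) = q ^ (-(d + 1)) * (1 + q ^ (2 * d + 2)) := by
    rw [mul_add, mul_one, ← zpow_add₀ hq0]
    ring_nf
  have expand : (q ^ d - q ^ (-d)) * q ^ (-(d + 1)) = q⁻¹ - q ^ (-(2 * d + 1)) := by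
    rw [sub_mul, ← zpow_add₀ hq0, ← zpow_add₀ hq0, ← zpow_neg_one]
    ring_nf
  have hq' : q ^ 2 - 1 ≠ 0 := sub_ne_zero.2 hq
  rw [factor, ← expand]
  field_simp

theorem stmt12_general (K : Type*) [Field K]
    (V : Type*) [AddCommGroup V] [Module K V]
    (q : K) (hq0 : q ≠ 0) (hqru : ∀ k : ℕ, k ≠ 0 → q ^ k ≠ 1)
    (d : ℤ) (hd : (1 : K) + q ^ (2 * d + 2) ≠ 0)
    (κ : K) (hκ : κ = -((q ^ d - q ^ (-d)) / (q - q⁻¹)) * (q ^ (d + 1) + q ^ (-(d + 1))))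
    (Ps Kop : Module.End K V)
    (hPs : Ps * Ps = Ps) (hPK : Ps * Kop = 0) (hKP : Kop * Ps = 0)
    (hK2 : Kop * Kop = κ • Kop)
    (Rh : Module.End K V)
    (hRh : Rh = (q + q⁻¹) • Ps - q⁻¹ • (1 : Module.End K V)
        + (-(q - q⁻¹) * ((1 : K) + q ^ (2 * d + 2))⁻¹) • Kop) :
    Rh * Kop = (-(q ^ (-(2 * d + 1)))) • Kop ∧
    Kop * Rh = (-(q ^ (-(2 * d + 1)))) • Kop ∧
    (Rh - q • (1 : Module.End K V)) * (Rh + q⁻¹ • (1 : Module.End K V)) *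
        (Rh + q ^ (-(2 * d + 1)) • (1 : Module.End K V)) = 0 := by
  set c := -(q - q⁻¹) * ((1 : K) + q ^ (2 * d + 2))⁻¹
  have hcκ : c * κ = q⁻¹ - q ^ (-(2 * d + 1)) :=
    hκ ▸ coeff_mul_kappa_eq hq0 (hqru 2 two_ne_zero) hd
  have hEigen : -q⁻¹ + c * κ = -q ^ (-(2 * d + 1)) := by rw [hcκ]; ring
  replace hRh : Rh = rMatrix q c Ps Kop := hRh
  subst hRh
  refine ⟨by rw [rMatrix_mul_right hPK hK2, hEigen], by rw [rMatrix_mul_left hKP hK2, hEigen], ?_⟩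
  simpa only [hcκ, sub_sub_cancel] using rMatrix_cubic hPs hPK hKP hK2 q c

/-- Under the same algebraic hypotheses, R̂ satisfies
R̂ K = K R̂ = -q^{-2d-1} K and the cubic relation
(R̂ - q·Id)(R̂ + q⁻¹·Id)(R̂ + q^{-2d-1}·Id) = 0. -/
theorem stmt12 (K : Type*) [Field K] [CharZero K]
    (V : Type*) [AddCommGroup V] [Module K V]
    (q : K) (hq0 : q ≠ 0) (hqru : ∀ k : ℕ, k ≠ 0 → q ^ k ≠ 1)
    (d : ℤ) (hd : (1 : K) + q ^ (2 * d + 2) ≠ 0)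
    (κ : K) (hκ : κ = -((q ^ d - q ^ (-d)) / (q - q⁻¹)) * (q ^ (d + 1) + q ^ (-(d + 1))))
    (Ps Kop : Module.End K V)
    (hPs : Ps * Ps = Ps) (hPK : Ps * Kop = 0) (hKP : Kop * Ps = 0)
    (hK2 : Kop * Kop = κ • Kop)
    (Rh : Module.End K V)
    (hRh : Rh = (q + q⁻¹) • Ps - q⁻¹ • (1 : Module.End K V)
        + (-(q - q⁻¹) * ((1 : K) + q ^ (2 * d + 2))⁻¹) • Kop) :
    Rh * Kop = (-(q ^ (-(2 * d + 1)))) • Kop ∧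
    Kop * Rh = (-(q ^ (-(2 * d + 1)))) • Kop ∧
    (Rh - q • (1 : Module.End K V)) * (Rh + q⁻¹ • (1 : Module.End K V)) *
        (Rh + q ^ (-(2 * d + 1)) • (1 : Module.End K V)) = 0 :=
  stmt12_general K V q hq0 hqru d hd κ hκ Ps Kop hPs hPK hKP hK2 Rh hRh
end

section
/- Under the same algebraic hypotheses, (R̂ - q·Id)(R̂ + q^{-1}·Id) = (q - q^{-1}) q^{-2d-1} K, so that K is a polynomial in R̂. -/
private lemma stmt13_aux {K : Type*} [Field K] (q t D : K) (hq : q ≠ 0) (ht : t ≠ 0)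
    (hsub : q - q⁻¹ ≠ 0) (hq21 : q ^ 2 - 1 ≠ 0) (hD0 : D ≠ 0) (hD : D = 1 + t ^ 2 * q ^ 2) :
    (-(q - q⁻¹) * D⁻¹) * ((-(q - q⁻¹) * D⁻¹) *
        (-((t - t⁻¹) / (q - q⁻¹)) * (t * q + t⁻¹ * q⁻¹)) - q⁻¹ - q)
      = (q - q⁻¹) * (t ^ 2 * q)⁻¹ := by
  have key : t * q + t⁻¹ * q⁻¹ = t⁻¹ * q⁻¹ * D := by
    rw [hD]; field_simp; ring
  have step1 : (-(q - q⁻¹) * D⁻¹) * (-((t - t⁻¹) / (q - q⁻¹)) * (t * q + t⁻¹ * q⁻¹))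
      = (t - t⁻¹) * t⁻¹ * q⁻¹ := by
    rw [key]
    have : (-(q - q⁻¹) * D⁻¹) * (-((t - t⁻¹) / (q - q⁻¹)) * (t⁻¹ * q⁻¹ * D))
        = ((q - q⁻¹) / (q - q⁻¹)) * ((t - t⁻¹) * t⁻¹ * q⁻¹) * (D⁻¹ * D) := by ring
    rw [this, div_self hsub, inv_mul_cancel₀ hD0, one_mul, mul_one]
  rw [step1]
  have step2 : (t - t⁻¹) * t⁻¹ * q⁻¹ - q⁻¹ - q = -(t⁻¹ ^ 2 * q⁻¹) * D := by
    rw [hD]; field_simp; ring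
  rw [step2]
  have h3 : (-(q - q⁻¹) * D⁻¹) * (-(t⁻¹ ^ 2 * q⁻¹) * D)
      = (q - q⁻¹) * (t⁻¹ ^ 2 * q⁻¹) * (D⁻¹ * D) := by ring
  rw [h3, inv_mul_cancel₀ hD0, mul_one, mul_inv, inv_pow]

/-- Under the same algebraic hypotheses,
(R̂ - q·Id)(R̂ + q⁻¹·Id) = (q - q⁻¹) q^{-2d-1} K, so that K is a polynomial
in R̂. -/
theorem stmt13 (K : Type*) [Field K] [CharZero K]
    (V : Type*) [AddCommGroup V] [Module K V]
    (q : K) (hq0 : q ≠ 0) (hqru : ∀ k : ℕ, k ≠ 0 → q ^ k ≠ 1)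
    (d : ℤ) (hd : (1 : K) + q ^ (2 * d + 2) ≠ 0)
    (κ : K) (hκ : κ = -((q ^ d - q ^ (-d)) / (q - q⁻¹)) * (q ^ (d + 1) + q ^ (-(d + 1))))
    (Ps Kop : Module.End K V)
    (hPs : Ps * Ps = Ps) (hPK : Ps * Kop = 0) (hKP : Kop * Ps = 0)
    (hK2 : Kop * Kop = κ • Kop)
    (Rh : Module.End K V)
    (hRh : Rh = (q + q⁻¹) • Ps - q⁻¹ • (1 : Module.End K V)
        + (-(q - q⁻¹) * ((1 : K) + q ^ (2 * d + 2))⁻¹) • Kop) :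
    (Rh - q • (1 : Module.End K V)) * (Rh + q⁻¹ • (1 : Module.End K V))
      = ((q - q⁻¹) * q ^ (-(2 * d + 1))) • Kop := by
  have hq2 : q ^ 2 ≠ 1 := hqru 2 (by norm_num)
  have hqd : q ^ d ≠ 0 := zpow_ne_zero d hq0
  have hsub : q - q⁻¹ ≠ 0 := by
    intro h
    apply hq2
    field_simp at h
    linear_combination h
  have h1 : q ^ (2 * d + 2) = (q ^ d) ^ 2 * q ^ 2 := by
    rw [show (2 * d + 2 : ℤ) = d + d + 1 + 1 by ring, zpow_add₀ hq0, zpow_add₀ hq0,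
      zpow_add₀ hq0, zpow_one]
    ring
  have h2 : q ^ (d + 1) = q ^ d * q := by rw [zpow_add₀ hq0, zpow_one]
  have h3 : q ^ (-(d + 1)) = (q ^ d)⁻¹ * q⁻¹ := by
    rw [zpow_neg, h2, mul_inv]
  have h4 : q ^ (-d) = (q ^ d)⁻¹ := by rw [zpow_neg]
  have h5 : q ^ (-(2 * d + 1)) = ((q ^ d) ^ 2 * q)⁻¹ := by
    rw [zpow_neg, show (2 * d + 1 : ℤ) = d + d + 1 by ring, zpow_add₀ hq0,
      zpow_add₀ hq0, zpow_one]
    ring_nf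
  rw [h1] at hd
  have hD0 : ((1 : K) + (q ^ d) ^ 2 * q ^ 2) ≠ 0 := hd
  subst hRh
  simp only [sub_mul, add_mul, mul_sub, mul_add, smul_mul_smul_comm, smul_mul_assoc,
    mul_smul_comm, hPs, hPK, hKP, hK2, mul_one, one_mul, smul_smul, smul_zero]
  match_scalars
  · ring
  · ring
  · rw [hκ, h1, h2, h3, h4, h5]
    linear_combination stmt13_aux q (q ^ d) ((1 : K) + (q ^ d) ^ 2 * q ^ 2) hq0 hqd hsub (sub_ne_zero.mpr hq2) hD0 rfl
end

section
/- Under the same algebraic hypotheses, assuming moreover P_s ≠ 0, K ≠ 0, and Id - P_s - K/κ ≠ 0, the polynomial (X - q)(X + q^{-1})(X + q^{-2d-1}) is the minimal polynomial of R̂: no proper divisor of it annihilates R̂. (Here the three eigenvalues q, -q^{-1}, -q^{-2d-1} are pairwise distinct, since q is not a root of unity, provided q^{2d+2} ≠ -1 and q^{2d} ≠ 1, i.e. d ≠ 0.) -/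
open Polynomial

/-- Two distinct linear polynomials over a field are coprime. -/
lemma coprime_X_sub_C_aux {K : Type*} [Field K] {a b : K} (h : a ≠ b) :
    IsCoprime (X - C a) (X - C b : K[X]) := by
  refine ⟨C ((b - a)⁻¹), -C ((b - a)⁻¹), ?_⟩
  have hba : b - a ≠ 0 := sub_ne_zero.2 (Ne.symm h)
  have : (C ((b - a)⁻¹) : K[X]) * (X - C a) + -C ((b - a)⁻¹) * (X - C b)
      = C ((b - a)⁻¹) * (C b - C a) := by ring
  rw [this, ← C_sub, ← C_mul, inv_mul_cancel₀ hba, map_one]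

/-- Under the same algebraic hypotheses, and assuming moreover
P_s ≠ 0, K ≠ 0, Id - P_s - κ⁻¹K ≠ 0, and d ≠ 0 (so that the eigenvalues
q, -q⁻¹, -q^{-2d-1} are pairwise distinct), the polynomial
(X - q)(X + q⁻¹)(X + q^{-2d-1}) is the minimal polynomial of R̂. -/
theorem stmt14 (K : Type*) [Field K] [CharZero K]
    (V : Type*) [AddCommGroup V] [Module K V]
    (q : K) (hq0 : q ≠ 0) (hqru : ∀ k : ℕ, k ≠ 0 → q ^ k ≠ 1)
    (d : ℤ) (hdne : d ≠ 0) (hd : (1 : K) + q ^ (2 * d + 2) ≠ 0)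
    (κ : K) (hκdef : κ = -((q ^ d - q ^ (-d)) / (q - q⁻¹)) * (q ^ (d + 1) + q ^ (-(d + 1))))
    (hκ0 : κ ≠ 0)
    (Ps Kop : Module.End K V)
    (hPsne : Ps ≠ 0) (hKne : Kop ≠ 0)
    (hComp : (1 : Module.End K V) - Ps - κ⁻¹ • Kop ≠ 0)
    (hPs : Ps * Ps = Ps) (hPK : Ps * Kop = 0) (hKP : Kop * Ps = 0)
    (hK2 : Kop * Kop = κ • Kop)
    (Rh : Module.End K V)
    (hRh : Rh = (q + q⁻¹) • Ps - q⁻¹ • (1 : Module.End K V)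
        + (-(q - q⁻¹) * ((1 : K) + q ^ (2 * d + 2))⁻¹) • Kop) :
    minpoly K Rh = (X - C q) * (X + C q⁻¹) * (X + C (q ^ (-(2 * d + 1)))) := by
  -- integer version of the root-of-unity hypothesis
  have hzru : ∀ n : ℤ, n ≠ 0 → q ^ n ≠ 1 := by
    intro n hn he
    apply hqru n.natAbs (Int.natAbs_ne_zero.mpr hn)
    have h2 : q ^ (n.natAbs : ℤ) = 1 := by
      rcases Int.natAbs_eq n with h | h
      · rw [← h, he]
      · rw [show ((n.natAbs : ℤ)) = -n by omega, zpow_neg, he, inv_one]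
    rwa [zpow_natCast] at h2
  -- basic nonvanishing facts
  have hq2 : q - q⁻¹ ≠ 0 := by
    intro h
    apply hqru 2 (by norm_num)
    have hq : q = q⁻¹ := sub_eq_zero.mp h
    calc q ^ 2 = q * q := sq q
    _ = q * q⁻¹ := by rw [← hq]
    _ = 1 := mul_inv_cancel₀ hq0
  set c : K := q ^ (-(2 * d + 1)) with hc
  -- distinctness of the three eigenvalues
  have hab : q ≠ -q⁻¹ := by
    intro h
    apply hqru 4 (by norm_num)
    have h2 : q * q = -1 := by
      calc q * q = (-q⁻¹) * q := by rw [← h]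
      _ = -(q⁻¹ * q) := by ring
      _ = -1 := by rw [inv_mul_cancel₀ hq0]
    calc q ^ 4 = (q * q) * (q * q) := by ring
    _ = (-1) * (-1) := by rw [h2]
    _ = 1 := by ring
  have hac : q ≠ -c := by
    intro h
    apply hd
    have h1 : q ^ (2 * d + 2) = q * q ^ (2 * d + 1) := by
      rw [show 2 * d + 2 = 1 + (2 * d + 1) by ring, zpow_add₀ hq0, zpow_one]
    have h2 : q * q ^ (2 * d + 1) = -1 := by
      calc q * q ^ (2 * d + 1) = -c * q ^ (2 * d + 1) := by rw [← h]
      _ = -1 := by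
          rw [hc, zpow_neg, neg_mul, inv_mul_cancel₀ (zpow_ne_zero _ hq0)]
    rw [h1, h2]; ring
  have hbc : (-q⁻¹ : K) ≠ -c := by
    intro h
    apply hzru (2 * d) (by omega)
    have h1 : q⁻¹ = (q ^ (2 * d + 1))⁻¹ := by
      have := neg_injective h
      rwa [hc, zpow_neg] at this
    have h2 : q ^ (2 * d + 1) = q := by
      have := inv_injective h1
      exact this.symm
    calc q ^ (2 * d) = q ^ (2 * d + 1) * q⁻¹ := by
          rw [zpow_add₀ hq0, zpow_one, mul_assoc, mul_inv_cancel₀ hq0, mul_one]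
    _ = q * q⁻¹ := by rw [h2]
    _ = 1 := mul_inv_cancel₀ hq0
  -- abbreviation for q^d and zpow rewrites
  set t : K := q ^ (d : ℤ) with htdef
  have ht0 : t ≠ 0 := zpow_ne_zero _ hq0
  have hz1 : q ^ (-d) = t⁻¹ := by rw [zpow_neg]
  have hz2 : q ^ (d + 1) = t * q := by rw [zpow_add₀ hq0, zpow_one]
  have hz3 : q ^ (-(d + 1)) = (t * q)⁻¹ := by rw [zpow_neg, hz2]
  have hz4 : q ^ (2 * d + 2) = (t * q) * (t * q) := by
    rw [show 2 * d + 2 = (d + 1) + (d + 1) by ring, zpow_add₀ hq0, hz2]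
  have hz5 : c = (t * (t * q))⁻¹ := by
    rw [hc, zpow_neg, show 2 * d + 1 = d + (d + 1) by ring, zpow_add₀ hq0, hz2]
  -- the key scalar identity relating the coefficient of Kop to κ
  have hd' : (1 : K) + (t * q) * (t * q) ≠ 0 := by rwa [hz4] at hd
  have hpoly : (t - t⁻¹) * (t * q + (t * q)⁻¹)
      = (q⁻¹ - (t * (t * q))⁻¹) * (1 + t * q * (t * q)) := by
    field_simp
    ring
  have hkey : -(q - q⁻¹) * ((1 : K) + q ^ (2 * d + 2))⁻¹ = (q⁻¹ - c) * κ⁻¹ := by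
    rw [eq_mul_inv_iff_mul_eq₀ hκ0, hκdef, hz1, hz2, hz3, hz4, hz5]
    have h1 : -(q - q⁻¹) * (1 + t * q * (t * q))⁻¹
          * (-((t - t⁻¹) / (q - q⁻¹)) * (t * q + (t * q)⁻¹))
        = ((t - t⁻¹) / (q - q⁻¹) * (q - q⁻¹))
          * ((t * q + (t * q)⁻¹) * (1 + t * q * (t * q))⁻¹) := by ring
    rw [h1, div_mul_cancel₀ _ hq2, ← mul_assoc, hpoly, mul_assoc,
      mul_inv_cancel₀ hd', mul_one]
  -- the idempotents
  set e3 : Module.End K V := κ⁻¹ • Kop with he3def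
  set e2 : Module.End K V := 1 - Ps - e3 with he2def
  have he3ne : e3 ≠ 0 := smul_ne_zero (inv_ne_zero hκ0) hKne
  have hP3 : Ps * e3 = 0 := by rw [he3def, mul_smul_comm, hPK, smul_zero]
  have h3P : e3 * Ps = 0 := by rw [he3def, smul_mul_assoc, hKP, smul_zero]
  have h33 : e3 * e3 = e3 := by
    rw [he3def, smul_mul_assoc, mul_smul_comm, hK2, smul_smul, smul_smul]
    congr 1
    field_simp
  have hP2 : Ps * e2 = 0 := by
    rw [he2def, mul_sub, mul_sub, mul_one, hPs, hP3]; abel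
  have h2P : e2 * Ps = 0 := by
    rw [he2def, sub_mul, sub_mul, one_mul, hPs, h3P]; abel
  have h23 : e2 * e3 = 0 := by
    rw [he2def, sub_mul, sub_mul, one_mul, hP3, h33]; abel
  have h32 : e3 * e2 = 0 := by
    rw [he2def, mul_sub, mul_sub, mul_one, h3P, h33]; abel
  have h22 : e2 * e2 = e2 := by
    rw [he2def, mul_sub, mul_sub, mul_one]
    rw [show (1 - Ps - e3) * Ps = 0 from h2P ▸ (by rw [he2def]),
        show (1 - Ps - e3) * e3 = 0 from h23 ▸ (by rw [he2def])]
    abel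
  -- spectral form of Rh
  have hone : (1 : Module.End K V) = Ps + e2 + e3 := by rw [he2def]; abel
  have hRh' : Rh = q • Ps + (-q⁻¹) • e2 + (-c) • e3 := by
    rw [hRh, hkey, he2def, he3def]
    rw [smul_smul]
    module
  -- Rh annihilates the cubic
  have hA : Rh - q • 1 = (-q⁻¹ - q) • e2 + (-c - q) • e3 := by
    rw [hRh', hone]; module
  have hB : Rh + q⁻¹ • 1 = (q + q⁻¹) • Ps + (-c + q⁻¹) • e3 := by
    rw [hRh', hone]; module
  have hC : Rh + c • 1 = (q + c) • Ps + (-q⁻¹ + c) • e2 := by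
    rw [hRh', hone]; module
  have hprod : (Rh - q • 1) * (Rh + q⁻¹ • 1) * (Rh + c • 1) = 0 := by
    rw [hA, hB, hC]
    simp only [add_mul, mul_add, smul_mul_assoc, mul_smul_comm, smul_smul,
      h2P, h23, h3P, h33, h32, smul_zero, zero_add, add_zero, zero_mul, mul_zero]
  have haeval : (aeval Rh) ((X - C q) * (X + C q⁻¹) * (X + C c)) = 0 := by
    simp only [map_mul, map_sub, map_add, aeval_X, aeval_C,
      Algebra.algebraMap_eq_smul_one]
    exact hprod
  have pmonic : ((X - C q) * (X + C q⁻¹) * (X + C c) : K[X]).Monic :=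
    ((monic_X_sub_C q).mul (monic_X_add_C q⁻¹)).mul (monic_X_add_C c)
  have hint : IsIntegral K Rh := ⟨_, pmonic, haeval⟩
  have hdvd1 : minpoly K Rh ∣ (X - C q) * (X + C q⁻¹) * (X + C c) :=
    minpoly.dvd K Rh haeval
  -- each eigenvalue is a root of the minimal polynomial
  have key : ∀ (lam : K) (e : Module.End K V), e ≠ 0 → Rh * e = lam • e →
      (minpoly K Rh).IsRoot lam := by
    intro lam e he hre
    obtain ⟨v, hv⟩ : ∃ v, e v ≠ 0 := by
      by_contra h
      push_neg at h
      exact he (LinearMap.ext fun v => by simp [h v])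
    refine Module.End.isRoot_of_hasEigenvalue
      (Module.End.hasEigenvalue_of_hasEigenvector
        ⟨Module.End.mem_eigenspace_iff.2 ?_, hv⟩)
    calc Rh (e v) = (Rh * e) v := rfl
    _ = (lam • e) v := by rw [hre]
    _ = lam • e v := rfl
  have ra : (minpoly K Rh).IsRoot q := by
    refine key q Ps hPsne ?_
    rw [hRh', add_mul, add_mul, smul_mul_assoc, smul_mul_assoc, smul_mul_assoc,
      hPs, h2P, h3P, smul_zero, smul_zero, add_zero, add_zero]
  have rb : (minpoly K Rh).IsRoot (-q⁻¹) := by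
    refine key (-q⁻¹) e2 hComp ?_
    rw [hRh', add_mul, add_mul, smul_mul_assoc, smul_mul_assoc, smul_mul_assoc,
      hP2, h22, h32, smul_zero, smul_zero, zero_add, add_zero]
  have rc : (minpoly K Rh).IsRoot (-c) := by
    refine key (-c) e3 he3ne ?_
    rw [hRh', add_mul, add_mul, smul_mul_assoc, smul_mul_assoc, smul_mul_assoc,
      hP3, h23, h33, smul_zero, smul_zero, zero_add, zero_add]
  -- the cubic divides the minimal polynomial
  have da : X - C q ∣ minpoly K Rh := dvd_iff_isRoot.2 ra
  have db : X + C q⁻¹ ∣ minpoly K Rh := by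
    have := dvd_iff_isRoot.2 rb
    rwa [map_neg, sub_neg_eq_add] at this
  have dc : X + C c ∣ minpoly K Rh := by
    have := dvd_iff_isRoot.2 rc
    rwa [map_neg, sub_neg_eq_add] at this
  have cab : IsCoprime (X - C q) (X + C q⁻¹ : K[X]) := by
    have := coprime_X_sub_C_aux (a := q) (b := -q⁻¹) hab
    rwa [map_neg, sub_neg_eq_add] at this
  have cac : IsCoprime (X - C q) (X + C c : K[X]) := by
    have := coprime_X_sub_C_aux (a := q) (b := -c) hac
    rwa [map_neg, sub_neg_eq_add] at this
  have cbc : IsCoprime (X + C q⁻¹) (X + C c : K[X]) := by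
    have := coprime_X_sub_C_aux (a := -q⁻¹) (b := -c) hbc
    rwa [map_neg, map_neg, sub_neg_eq_add, sub_neg_eq_add] at this
  have hdvd2 : (X - C q) * (X + C q⁻¹) * (X + C c) ∣ minpoly K Rh :=
    (cac.mul_left cbc).mul_dvd (cab.mul_dvd da db) dc
  exact eq_of_monic_of_associated (minpoly.monic hint) pmonic
    (associated_of_dvd_dvd hdvd1 hdvd2)
end
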